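/- arXiv:2506.17567 — 6 statements merged into one kernel-verified Lean document; each statement's English description precedes it below -/
import Mathlib

section
/- Let V be a real vector space with a symmetric bilinear form (·,·), let H ∈ V satisfy (H·H) = 2n, and for i = 1,2 let u_i = (r_i, ξ_i, a_i) be Mukai vectors with ξ_i = d_i H + D_i where (D_i·H) = 0 and r_i, d_i, a_i ∈ ℝ. Assume each u_i is isotropic, i.e. (ξ_i·ξ_i) = 2 r_i a_i. Then d_1 d_2 ⟨u_1,u_2⟩ = −(1/2)·((d_2 D_1 − d_1 D_2)·(d_2 D_1 − d_1 D_2)) + (d_2 r_1 − d_1 r_2)(d_2 a_1 − d_1 a_2). -/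
/-! The vector `w = d₂ u₁ - d₁ u₂` has no `H`-component: `w = (d₂r₁ - d₁r₂, d₂D₁ - d₁D₂, d₂a₁ - d₁a₂)`.
Expanding `⟨w, w⟩` bilinearly and using `⟨uᵢ, uᵢ⟩ = 0` gives `⟨w, w⟩ = -2 d₁ d₂ ⟨u₁, u₂⟩`, while
directly `⟨w, w⟩ = (d₂D₁ - d₁D₂)² - 2 (d₂r₁ - d₁r₂)(d₂a₁ - d₁a₂)`. -/

namespace LinearMap

variable {R M : Type*} [CommRing R] [AddCommGroup M] [Module R M]

theorem apply_smul_sub_smul_self (B : M →ₗ[R] M →ₗ[R] R) (hsymm : ∀ x y, B x y = B y x)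
    (a b : R) (x y : M) :
    B (a • x - b • y) (a • x - b • y) = a ^ 2 * B x x - 2 * a * b * B x y + b ^ 2 * B y y := by
  simp only [map_sub, map_smul, sub_apply, smul_apply, smul_eq_mul, hsymm y x]
  ring

end LinearMap

theorem mul_mul_mukai_pairing_eq_of_isotropic {V : Type*} [AddCommGroup V] [Module ℝ V]
    (B : V →ₗ[ℝ] V →ₗ[ℝ] ℝ) (hsymm : ∀ x y, B x y = B y x)
    (r₁ d₁ a₁ r₂ d₂ a₂ : ℝ) (ξ₁ ξ₂ : V)
    (hiso₁ : B ξ₁ ξ₁ = 2 * r₁ * a₁) (hiso₂ : B ξ₂ ξ₂ = 2 * r₂ * a₂) :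
    d₁ * d₂ * (B ξ₁ ξ₂ - r₁ * a₂ - r₂ * a₁) =
      -(1 / 2) * B (d₂ • ξ₁ - d₁ • ξ₂) (d₂ • ξ₁ - d₁ • ξ₂) +
        (d₂ * r₁ - d₁ * r₂) * (d₂ * a₁ - d₁ * a₂) := by
  rw [B.apply_smul_sub_smul_self hsymm, hiso₁, hiso₂]
  ring

theorem stmt0_general {V : Type*} [AddCommGroup V] [Module ℝ V]
    (B : V →ₗ[ℝ] V →ₗ[ℝ] ℝ) (hsymm : ∀ x y, B x y = B y x)
    (H : V)
    (r₁ d₁ a₁ r₂ d₂ a₂ : ℝ) (D₁ D₂ : V)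
    (hiso₁ : B (d₁ • H + D₁) (d₁ • H + D₁) = 2 * r₁ * a₁)
    (hiso₂ : B (d₂ • H + D₂) (d₂ • H + D₂) = 2 * r₂ * a₂) :
    d₁ * d₂ * (B (d₁ • H + D₁) (d₂ • H + D₂) - r₁ * a₂ - r₂ * a₁) =
      -(1 / 2) * B (d₂ • D₁ - d₁ • D₂) (d₂ • D₁ - d₁ • D₂) +
        (d₂ * r₁ - d₁ * r₂) * (d₂ * a₁ - d₁ * a₂) := by
  have hH_cancels : d₂ • D₁ - d₁ • D₂ = d₂ • (d₁ • H + D₁) - d₁ • (d₂ • H + D₂) := by module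
  rw [hH_cancels]
  exact mul_mul_mukai_pairing_eq_of_isotropic B hsymm r₁ d₁ a₁ r₂ d₂ a₂ _ _ hiso₁ hiso₂

/-- Lemma 5.4: for isotropic Mukai vectors `uᵢ = (rᵢ, dᵢ H + Dᵢ, aᵢ)`
with `Dᵢ ⊥ H` and `(H·H) = 2n`, one has
`d₁ d₂ ⟨u₁,u₂⟩ = −(1/2)((d₂D₁ − d₁D₂)²) + (d₂r₁ − d₁r₂)(d₂a₁ − d₁a₂)`. -/
theorem stmt0 {V : Type*} [AddCommGroup V] [Module ℝ V]
    (B : V →ₗ[ℝ] V →ₗ[ℝ] ℝ) (hsymm : ∀ x y, B x y = B y x)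
    (H : V) (n : ℝ) (hH : B H H = 2 * n)
    (r₁ d₁ a₁ r₂ d₂ a₂ : ℝ) (D₁ D₂ : V)
    (hD₁ : B D₁ H = 0) (hD₂ : B D₂ H = 0)
    (hiso₁ : B (d₁ • H + D₁) (d₁ • H + D₁) = 2 * r₁ * a₁)
    (hiso₂ : B (d₂ • H + D₂) (d₂ • H + D₂) = 2 * r₂ * a₂) :
    d₁ * d₂ * (B (d₁ • H + D₁) (d₂ • H + D₂) - r₁ * a₂ - r₂ * a₁) =
      -(1 / 2) * B (d₂ • D₁ - d₁ • D₂) (d₂ • D₁ - d₁ • D₂) +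
        (d₂ * r₁ - d₁ * r₂) * (d₂ * a₁ - d₁ * a₂) :=
  stmt0_general B hsymm H r₁ d₁ a₁ r₂ d₂ a₂ D₁ D₂ hiso₁ hiso₂
end

section
/- Let V be a real vector space with a symmetric bilinear form (·,·), let H ∈ V satisfy (H·H) = 2n with n > 0, and assume (·,·) is negative semidefinite on H^⊥ = {D ∈ V : (D·H) = 0} (Hodge index condition). For i = 1,2 let u_i = (r_i, d_i H + D_i, a_i) be isotropic Mukai vectors with (D_i·H) = 0 and d_1, d_2 > 0. If ⟨u_1,u_2⟩ ≤ 0, then (d_2 r_1 − d_1 r_2)(d_2 a_1 − d_1 a_2) ≤ 0; in particular, if moreover d_2 r_1 − d_1 r_2 > 0 then d_2 a_1 − d_1 a_2 ≤ 0, and if d_2 r_1 − d_1 r_2 < 0 then d_2 a_1 − d_1 a_2 ≥ 0. -/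
/-! For isotropic `u₁, u₂` put `w = d₂ u₁ - d₁ u₂`. Its `H`-component cancels, so its middle
component `E = d₂ D₁ - d₁ D₂` lies in `H^⊥`, and the Hodge index condition gives `(E·E) ≤ 0`.
On the other hand `⟨w, w⟩ = -2 d₁ d₂ ⟨u₁, u₂⟩ ≥ 0` while `⟨w, w⟩ = (E·E) - 2 r(w) a(w)`, so
`r(w) a(w) = (d₂ r₁ - d₁ r₂)(d₂ a₁ - d₁ a₂) ≤ 0`. -/

section MukaiPairing

variable {R V : Type*} [CommRing R] [AddCommGroup V] [Module R V] (B : V →ₗ[R] V →ₗ[R] R)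

def mukaiPairing (u v : R × V × R) : R :=
  B u.2.1 v.2.1 - u.1 * v.2.2 - v.1 * u.2.2

theorem mukaiPairing_self (u : R × V × R) :
    mukaiPairing B u u = B u.2.1 u.2.1 - 2 * u.1 * u.2.2 := by
  rw [mukaiPairing]
  ring

variable {B}

theorem mukaiPairing_comm (hsymm : ∀ x y, B x y = B y x) (u v : R × V × R) :
    mukaiPairing B u v = mukaiPairing B v u := by
  rw [mukaiPairing, mukaiPairing, hsymm]
  ring

theorem mukaiPairing_smul_sub_smul_self (hsymm : ∀ x y, B x y = B y x) (s t : R)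
    (u v : R × V × R) :
    mukaiPairing B (s • u - t • v) (s • u - t • v) =
      s ^ 2 * mukaiPairing B u u - 2 * s * t * mukaiPairing B u v
        + t ^ 2 * mukaiPairing B v v := by
  have hvu := mukaiPairing_comm hsymm v u
  simp only [mukaiPairing, Prod.fst_sub, Prod.snd_sub, Prod.smul_fst, Prod.smul_snd,
    smul_eq_mul, map_sub, map_smul, LinearMap.sub_apply, LinearMap.smul_apply] at hvu ⊢
  linear_combination (-(s * t)) * hvu

end MukaiPairing

section Sign

variable {R V : Type*} [CommRing R] [LinearOrder R] [IsStrictOrderedRing R]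
  [AddCommGroup V] [Module R V] {B : V →ₗ[R] V →ₗ[R] R}

theorem mul_nonpos_of_mukaiPairing_nonpos (hsymm : ∀ x y, B x y = B y x)
    {r₁ a₁ r₂ a₂ s t : R} {ξ₁ ξ₂ : V}
    (hiso₁ : mukaiPairing B (r₁, ξ₁, a₁) (r₁, ξ₁, a₁) = 0)
    (hiso₂ : mukaiPairing B (r₂, ξ₂, a₂) (r₂, ξ₂, a₂) = 0)
    (hpair : mukaiPairing B (r₁, ξ₁, a₁) (r₂, ξ₂, a₂) ≤ 0) (hst : 0 ≤ s * t)
    (hneg : B (s • ξ₁ - t • ξ₂) (s • ξ₁ - t • ξ₂) ≤ 0) :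
    (s * r₁ - t * r₂) * (s * a₁ - t * a₂) ≤ 0 := by
  have hw := mukaiPairing_smul_sub_smul_self hsymm s t (r₁, ξ₁, a₁) (r₂, ξ₂, a₂)
  rw [hiso₁, hiso₂, mukaiPairing_self] at hw
  simp only [Prod.fst_sub, Prod.snd_sub, Prod.smul_mk, smul_eq_mul] at hw
  nlinarith [mul_nonneg hst (neg_nonneg.mpr hpair)]

end Sign

theorem stmt1_general {V : Type*} [AddCommGroup V] [Module ℝ V]
    (B : V →ₗ[ℝ] V →ₗ[ℝ] ℝ) (hsymm : ∀ x y, B x y = B y x)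
    (H : V)
    (hneg : ∀ D : V, B D H = 0 → B D D ≤ 0)
    (r₁ d₁ a₁ r₂ d₂ a₂ : ℝ) (D₁ D₂ : V)
    (hD₁ : B D₁ H = 0) (hD₂ : B D₂ H = 0)
    (hd₁ : 0 < d₁) (hd₂ : 0 < d₂)
    (hiso₁ : B (d₁ • H + D₁) (d₁ • H + D₁) = 2 * r₁ * a₁)
    (hiso₂ : B (d₂ • H + D₂) (d₂ • H + D₂) = 2 * r₂ * a₂)
    (hpair : B (d₁ • H + D₁) (d₂ • H + D₂) - r₁ * a₂ - r₂ * a₁ ≤ 0) :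
    (d₂ * r₁ - d₁ * r₂) * (d₂ * a₁ - d₁ * a₂) ≤ 0 ∧
    (0 < d₂ * r₁ - d₁ * r₂ → d₂ * a₁ - d₁ * a₂ ≤ 0) ∧
    (d₂ * r₁ - d₁ * r₂ < 0 → 0 ≤ d₂ * a₁ - d₁ * a₂) := by
  have hE : d₂ • (d₁ • H + D₁) - d₁ • (d₂ • H + D₂) = d₂ • D₁ - d₁ • D₂ := by module
  have hEH : B (d₂ • D₁ - d₁ • D₂) H = 0 := by simp [hD₁, hD₂]
  have key : (d₂ * r₁ - d₁ * r₂) * (d₂ * a₁ - d₁ * a₂) ≤ 0 := by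
    refine mul_nonpos_of_mukaiPairing_nonpos hsymm ?_ ?_ hpair
      (mul_pos hd₂ hd₁).le (hE ▸ hneg _ hEH)
    · rw [mukaiPairing_self, hiso₁]; ring
    · rw [mukaiPairing_self, hiso₂]; ring
  exact ⟨key, fun h => nonpos_of_mul_nonpos_right key h,
    fun h => nonneg_of_mul_nonpos_right key h⟩

/-- With the Hodge-index condition (negative semidefiniteness of the
intersection form on `H^⊥`), for isotropic Mukai vectors `uᵢ = (rᵢ, dᵢH + Dᵢ, aᵢ)`
with `d₁, d₂ > 0` and `⟨u₁,u₂⟩ ≤ 0`, one has `(d₂r₁ − d₁r₂)(d₂a₁ − d₁a₂) ≤ 0`,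
and the two resulting sign implications. -/
theorem stmt1 {V : Type*} [AddCommGroup V] [Module ℝ V]
    (B : V →ₗ[ℝ] V →ₗ[ℝ] ℝ) (hsymm : ∀ x y, B x y = B y x)
    (H : V) (n : ℝ) (hn : 0 < n) (hH : B H H = 2 * n)
    (hneg : ∀ D : V, B D H = 0 → B D D ≤ 0)
    (r₁ d₁ a₁ r₂ d₂ a₂ : ℝ) (D₁ D₂ : V)
    (hD₁ : B D₁ H = 0) (hD₂ : B D₂ H = 0)
    (hd₁ : 0 < d₁) (hd₂ : 0 < d₂)
    (hiso₁ : B (d₁ • H + D₁) (d₁ • H + D₁) = 2 * r₁ * a₁)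
    (hiso₂ : B (d₂ • H + D₂) (d₂ • H + D₂) = 2 * r₂ * a₂)
    (hpair : B (d₁ • H + D₁) (d₂ • H + D₂) - r₁ * a₂ - r₂ * a₁ ≤ 0) :
    (d₂ * r₁ - d₁ * r₂) * (d₂ * a₁ - d₁ * a₂) ≤ 0 ∧
    (0 < d₂ * r₁ - d₁ * r₂ → d₂ * a₁ - d₁ * a₂ ≤ 0) ∧
    (d₂ * r₁ - d₁ * r₂ < 0 → 0 ≤ d₂ * a₁ - d₁ * a₂) :=
  stmt1_general B hsymm H hneg r₁ d₁ a₁ r₂ d₂ a₂ D₁ D₂ hD₁ hD₂ hd₁ hd₂ hiso₁ hiso₂ hpair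
end

section
/- Let v = (r, ξ, a) be a Mukai vector admitting a decomposition v = ℓ v₁ + v₂ with v₁ = (r₁, ξ₁, a₁), v₂ = (r₂, ξ₂, a₂), where ℓ ≥ 1 is an integer, ⟨v₁,v₁⟩ = ⟨v₂,v₂⟩ = 0, ⟨v₁,v₂⟩ = 1, and r₁, r₂ ≥ 1. Then ⟨v,v⟩ = 2ℓ and 2r > ⟨v,v⟩. Consequently, if ⟨v,v⟩ ≥ 2r then no such decomposition exists. -/
/-- The Mukai pairing on `ℤ ⊕ N ⊕ ℤ`:
`⟨(r₁,ξ₁,a₁),(r₂,ξ₂,a₂)⟩ = (ξ₁·ξ₂) − r₁a₂ − r₂a₁`. -/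
def mukaiPair {N : Type*} [AddCommGroup N] [Module ℤ N]
    (B : N →ₗ[ℤ] N →ₗ[ℤ] ℤ) (v w : ℤ × N × ℤ) : ℤ :=
  B v.2.1 w.2.1 - v.1 * w.2.2 - w.1 * v.2.2

section MukaiPair

variable {N : Type*} [AddCommGroup N] [Module ℤ N] (B : N →ₗ[ℤ] N →ₗ[ℤ] ℤ)

theorem mukaiPair_comm (hsymm : ∀ x y, B x y = B y x) (v w : ℤ × N × ℤ) :
    mukaiPair B v w = mukaiPair B w v := by
  simp only [mukaiPair, hsymm v.2.1]
  ring

theorem mukaiPair_add_left (u v w : ℤ × N × ℤ) :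
    mukaiPair B (u + v) w = mukaiPair B u w + mukaiPair B v w := by
  simp only [mukaiPair, Prod.fst_add, Prod.snd_add, map_add, LinearMap.add_apply]
  ring

theorem mukaiPair_add_right (u v w : ℤ × N × ℤ) :
    mukaiPair B u (v + w) = mukaiPair B u v + mukaiPair B u w := by
  simp only [mukaiPair, Prod.fst_add, Prod.snd_add, map_add]
  ring

theorem mukaiPair_smul_left (c : ℤ) (v w : ℤ × N × ℤ) :
    mukaiPair B (c • v) w = c * mukaiPair B v w := by
  simp only [mukaiPair, Prod.smul_fst, Prod.smul_snd, smul_eq_mul, map_zsmul,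
    LinearMap.smul_apply]
  ring

theorem mukaiPair_smul_right (c : ℤ) (v w : ℤ × N × ℤ) :
    mukaiPair B v (c • w) = c * mukaiPair B v w := by
  simp only [mukaiPair, Prod.smul_fst, Prod.smul_snd, smul_eq_mul, map_zsmul]
  ring

theorem mukaiPair_smul_add_self (c : ℤ) (v w : ℤ × N × ℤ) :
    mukaiPair B (c • v + w) (c • v + w) =
      c ^ 2 * mukaiPair B v v + c * (mukaiPair B v w + mukaiPair B w v) + mukaiPair B w w := by
  simp only [mukaiPair_add_left, mukaiPair_add_right, mukaiPair_smul_left,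
    mukaiPair_smul_right]
  ring

end MukaiPair

/-- If `v = ℓ v₁ + v₂` with `v₁, v₂` isotropic, `⟨v₁,v₂⟩ = 1`,
`ℓ ≥ 1` and both ranks `≥ 1`, then `⟨v,v⟩ = 2ℓ` and `2r > ⟨v,v⟩`; consequently
such a decomposition cannot exist when `⟨v,v⟩ ≥ 2r`. -/
theorem stmt2 {N : Type*} [AddCommGroup N] [Module ℤ N]
    (B : N →ₗ[ℤ] N →ₗ[ℤ] ℤ) (hsymm : ∀ x y, B x y = B y x)
    (ℓ : ℤ) (hℓ : 1 ≤ ℓ) (v v₁ v₂ : ℤ × N × ℤ)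
    (hdec : v = ℓ • v₁ + v₂)
    (h₁ : mukaiPair B v₁ v₁ = 0) (h₂ : mukaiPair B v₂ v₂ = 0)
    (h₁₂ : mukaiPair B v₁ v₂ = 1)
    (hr₁ : 1 ≤ v₁.1) (hr₂ : 1 ≤ v₂.1) :
    mukaiPair B v v = 2 * ℓ ∧ 2 * v.1 > mukaiPair B v v ∧
      (mukaiPair B v v ≥ 2 * v.1 → False) := by
  have hsq : mukaiPair B v v = 2 * ℓ := by
    rw [hdec, mukaiPair_smul_add_self, h₁, h₂, mukaiPair_comm B hsymm v₂, h₁₂]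
    ring
  have hrank : ℓ < v.1 := by
    have : v.1 = ℓ * v₁.1 + v₂.1 := by rw [hdec]; rfl
    nlinarith
  exact ⟨hsq, by omega, by omega⟩
end

section
/- Let ℓ₁, ℓ₂, ℓ₁′, ℓ₂′ be positive rationals with ℓ₁ℓ₂ = ℓ₁′ℓ₂′ = ℓ, and let r₁, r₂, r₁′, r₂′, d₁, d₂, d₁′, d₂′ be rationals satisfying r := ℓ₁r₁ + ℓ₂r₂ = ℓ₁′r₁′ + ℓ₂′r₂′ and d := ℓ₁d₁ + ℓ₂d₂ = ℓ₁′d₁′ + ℓ₂′d₂′. Assume r₁d₁′ − r₁′d₁ > 0, r₂′d₂ − r₂d₂′ ≥ 0, and r₁′d − r d₁′ > 0. Then r₁d₂ − r₂d₁ > r₁′d₂′ − r₂′d₁′ > 0. -/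
/-!
Write `[v, w] = r_v d_w - r_w d_v` for vectors `v = (r_v, d_v)`. Since `[v₁', v₁'] = 0`, the
decomposition `v = ℓ₁' v₁' + ℓ₂' v₂'` gives `[v₁', v] = ℓ₂' [v₁', v₂']`, whence `[v₁', v₂'] > 0`.
Substituting `ℓ₁ v₁ = v - ℓ₂ v₂` and `ℓ₁' v₁' = v - ℓ₂' v₂'` into `[v₁, v₁']` yields
`ℓ ([v₁, v₂] - [v₁', v₂']) = ℓ₁ ℓ₁' [v₁, v₁'] + ℓ₂ ℓ₂' [v₂', v₂]`, and the right-hand side is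
positive by hypothesis.
-/

theorem mul_cross_sub_mul_cross_eq {R : Type*} [CommRing R]
    {ℓ₁ ℓ₂ ℓ₁' ℓ₂' r₁ r₂ r₁' r₂' d₁ d₂ d₁' d₂' : R}
    (hr : ℓ₁ * r₁ + ℓ₂ * r₂ = ℓ₁' * r₁' + ℓ₂' * r₂')
    (hd : ℓ₁ * d₁ + ℓ₂ * d₂ = ℓ₁' * d₁' + ℓ₂' * d₂') :
    ℓ₁ * ℓ₂ * (r₁ * d₂ - r₂ * d₁) - ℓ₁' * ℓ₂' * (r₁' * d₂' - r₂' * d₁')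
      = ℓ₁ * ℓ₁' * (r₁ * d₁' - r₁' * d₁) + ℓ₂ * ℓ₂' * (r₂' * d₂ - r₂ * d₂') := by
  linear_combination (ℓ₂ * d₂ - ℓ₁' * d₁') * hr + (ℓ₁' * r₁' - ℓ₂ * r₂) * hd

section Ordered

variable {K : Type*} [CommRing K] [LinearOrder K] [IsStrictOrderedRing K]

theorem cross_pos_of_cross_add_pos {ℓ₁ ℓ₂ r₁ r₂ d₁ d₂ : K} (hℓ₂ : 0 < ℓ₂)
    (h : 0 < r₁ * (ℓ₁ * d₁ + ℓ₂ * d₂) - (ℓ₁ * r₁ + ℓ₂ * r₂) * d₁) :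
    0 < r₁ * d₂ - r₂ * d₁ := by
  have hcross : r₁ * (ℓ₁ * d₁ + ℓ₂ * d₂) - (ℓ₁ * r₁ + ℓ₂ * r₂) * d₁
      = ℓ₂ * (r₁ * d₂ - r₂ * d₁) := by ring
  exact pos_of_mul_pos_right (hcross ▸ h) hℓ₂.le

theorem cross_lt_cross_of_add_eq_add {ℓ₁ ℓ₂ ℓ₁' ℓ₂' r₁ r₂ r₁' r₂' d₁ d₂ d₁' d₂' : K}
    (hℓ₁ : 0 < ℓ₁) (hℓ₂ : 0 < ℓ₂) (hℓ₁' : 0 < ℓ₁') (hℓ₂' : 0 < ℓ₂')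
    (hℓ : ℓ₁ * ℓ₂ = ℓ₁' * ℓ₂')
    (hr : ℓ₁ * r₁ + ℓ₂ * r₂ = ℓ₁' * r₁' + ℓ₂' * r₂')
    (hd : ℓ₁ * d₁ + ℓ₂ * d₂ = ℓ₁' * d₁' + ℓ₂' * d₂')
    (h₁ : 0 < r₁ * d₁' - r₁' * d₁) (h₂ : 0 ≤ r₂' * d₂ - r₂ * d₂') :
    r₁' * d₂' - r₂' * d₁' < r₁ * d₂ - r₂ * d₁ := by
  have hsum : 0 < ℓ₁ * ℓ₁' * (r₁ * d₁' - r₁' * d₁) + ℓ₂ * ℓ₂' * (r₂' * d₂ - r₂ * d₂') := by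
    positivity
  rw [← mul_cross_sub_mul_cross_eq hr hd, ← hℓ, ← mul_sub] at hsum
  exact sub_pos.mp (pos_of_mul_pos_right hsum (mul_pos hℓ₁ hℓ₂).le)

end Ordered

/-- The Proposition of Section 5.1 of the paper: comparison of
`r₁d₂ − r₂d₁` and `r₁′d₂′ − r₂′d₁′` at two adjacent totally semi-stable walls. -/
theorem stmt4 (ℓ ℓ₁ ℓ₂ ℓ₁' ℓ₂' r₁ r₂ r₁' r₂' d₁ d₂ d₁' d₂' r d : ℚ)
    (hℓ₁ : 0 < ℓ₁) (hℓ₂ : 0 < ℓ₂) (hℓ₁' : 0 < ℓ₁') (hℓ₂' : 0 < ℓ₂')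
    (hℓ : ℓ₁ * ℓ₂ = ℓ) (hℓ' : ℓ₁' * ℓ₂' = ℓ)
    (hr : r = ℓ₁ * r₁ + ℓ₂ * r₂) (hr' : r = ℓ₁' * r₁' + ℓ₂' * r₂')
    (hd : d = ℓ₁ * d₁ + ℓ₂ * d₂) (hd' : d = ℓ₁' * d₁' + ℓ₂' * d₂')
    (h1 : 0 < r₁ * d₁' - r₁' * d₁) (h2 : 0 ≤ r₂' * d₂ - r₂ * d₂')
    (h3 : 0 < r₁' * d - r * d₁') :
    r₁ * d₂ - r₂ * d₁ > r₁' * d₂' - r₂' * d₁' ∧ r₁' * d₂' - r₂' * d₁' > 0 := by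
  refine ⟨cross_lt_cross_of_add_eq_add hℓ₁ hℓ₂ hℓ₁' hℓ₂' (hℓ.trans hℓ'.symm)
    (hr.symm.trans hr') (hd.symm.trans hd') h1 h2, ?_⟩
  rw [hr', hd'] at h3
  exact cross_pos_of_cross_add_pos hℓ₂' h3
end

section
/- Let ℓ₁, ℓ₂, ℓ₁′, ℓ₂′ be positive rationals with ℓ₁ℓ₂ = ℓ₁′ℓ₂′ = ℓ, and let a₁, a₂, a₁′, a₂′, d₁, d₂, d₁′, d₂′ be rationals satisfying a := ℓ₁a₁ + ℓ₂a₂ = ℓ₁′a₁′ + ℓ₂′a₂′ and d := ℓ₁d₁ + ℓ₂d₂ = ℓ₁′d₁′ + ℓ₂′d₂′. Assume a₁′d₁ − a₁d₁′ ≥ 0 and d₂′a₂ − a₂′d₂ ≥ 0 with at least one of these two inequalities strict, and assume a₁d − a d₁ > 0. Then a₁′d₂′ − a₂′d₁′ > a₁d₂ − a₂d₁ > 0. -/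
/-!
Write `w = ℓ₁w₁ + ℓ₂w₂ = ℓ₁'w₁' + ℓ₂'w₂'` with `wᵢ = (aᵢ, dᵢ)`, `w = (a, d)`, and let `[u, v]` be the
2×2 determinant. For any alternating form, `P + Q = P' + Q'` gives
`[P', Q'] - [P, Q] = [P', P] + [Q, Q']` (put `u = P - P' = Q' - Q`; both sides equal `[P' + Q', u]`).
With `P = ℓ₁w₁`, `Q = ℓ₂w₂` and `ℓ₁ℓ₂ = ℓ₁'ℓ₂' = ℓ` this says that `ℓ` times the gain
`[w₁', w₂'] - [w₁, w₂]` is a positive combination of the two hypotheses' determinants, hence positive.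
Positivity of `[w₁, w₂]` itself is `ℓ₂[w₁, w₂] = [w₁, w] > 0`.
-/

theorem mul_det_sub_mul_det_eq_of_add_eq {R : Type*} [CommRing R]
    (ℓ₁ ℓ₂ ℓ₁' ℓ₂' a₁ a₂ a₁' a₂' d₁ d₂ d₁' d₂' : R)
    (ha : ℓ₁ * a₁ + ℓ₂ * a₂ = ℓ₁' * a₁' + ℓ₂' * a₂')
    (hd : ℓ₁ * d₁ + ℓ₂ * d₂ = ℓ₁' * d₁' + ℓ₂' * d₂') :
    ℓ₁' * ℓ₂' * (a₁' * d₂' - a₂' * d₁') - ℓ₁ * ℓ₂ * (a₁ * d₂ - a₂ * d₁) =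
      ℓ₁ * ℓ₁' * (a₁' * d₁ - a₁ * d₁') + ℓ₂ * ℓ₂' * (d₂' * a₂ - a₂' * d₂) := by
  linear_combination (ℓ₁' * d₁' - ℓ₂ * d₂) * ha - (ℓ₁' * a₁' - ℓ₂ * a₂) * hd

/-- Lemma 5.5(3) of the paper: comparison of
`a₁d₂ − a₂d₁` and `a₁′d₂′ − a₂′d₁′` at two adjacent totally semi-stable walls. -/
theorem stmt5 (ℓ ℓ₁ ℓ₂ ℓ₁' ℓ₂' a₁ a₂ a₁' a₂' d₁ d₂ d₁' d₂' a d : ℚ)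
    (hℓ₁ : 0 < ℓ₁) (hℓ₂ : 0 < ℓ₂) (hℓ₁' : 0 < ℓ₁') (hℓ₂' : 0 < ℓ₂')
    (hℓ : ℓ₁ * ℓ₂ = ℓ) (hℓ' : ℓ₁' * ℓ₂' = ℓ)
    (ha : a = ℓ₁ * a₁ + ℓ₂ * a₂) (ha' : a = ℓ₁' * a₁' + ℓ₂' * a₂')
    (hd : d = ℓ₁ * d₁ + ℓ₂ * d₂) (hd' : d = ℓ₁' * d₁' + ℓ₂' * d₂')
    (h1 : 0 ≤ a₁' * d₁ - a₁ * d₁') (h2 : 0 ≤ d₂' * a₂ - a₂' * d₂)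
    (hstrict : 0 < a₁' * d₁ - a₁ * d₁' ∨ 0 < d₂' * a₂ - a₂' * d₂)
    (h3 : 0 < a₁ * d - a * d₁) :
    a₁' * d₂' - a₂' * d₁' > a₁ * d₂ - a₂ * d₁ ∧ a₁ * d₂ - a₂ * d₁ > 0 := by
  have hdet : 0 < a₁ * d₂ - a₂ * d₁ := by
    have h : ℓ₂ * (a₁ * d₂ - a₂ * d₁) = a₁ * d - a * d₁ := by rw [ha, hd]; ring
    exact pos_of_mul_pos_right (h ▸ h3) hℓ₂.le
  have hgain : 0 < ℓ₁ * ℓ₁' * (a₁' * d₁ - a₁ * d₁') + ℓ₂ * ℓ₂' * (d₂' * a₂ - a₂' * d₂) := by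
    rcases hstrict with h | h
    · exact add_pos_of_pos_of_nonneg (by positivity) (by positivity)
    · exact add_pos_of_nonneg_of_pos (by positivity) (by positivity)
  have hid := mul_det_sub_mul_det_eq_of_add_eq ℓ₁ ℓ₂ ℓ₁' ℓ₂' a₁ a₂ a₁' a₂' d₁ d₂ d₁' d₂'
    (ha.symm.trans ha') (hd.symm.trans hd')
  rw [hℓ, hℓ'] at hid
  refine ⟨lt_of_mul_lt_mul_left ?_ (hℓ ▸ mul_pos hℓ₁ hℓ₂).le, hdet⟩
  linarith
end

section
/- Let n, d, d₁, t₀, ε be positive reals and r, r₁, a, a₁ ∈ ℝ. Assume the wall condition a d₁ − a₁ d = n t₀² (r d₁ − r₁ d), and assume that for every t with t₀ < t < t₀ + ε one has (a − r n t²)/(2 n d t) > (a₁ − r₁ n t²)/(2 n d₁ t). Then r d₁ − r₁ d < 0 and a d₁ − a₁ d < 0. -/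
/-!
Clearing the positive denominators turns the slope inequality at `t` into
`n t² (r d₁ − r₁ d) < a d₁ − a₁ d`, whose right-hand side equals `n t₀² (r d₁ − r₁ d)` on the
wall. Since `t₀ < t`, this forces `r d₁ − r₁ d < 0`, and then the wall equation gives
`a d₁ − a₁ d < 0`.
-/

/-- Slope of the Mukai vector `(r, dH + D, a)` at `σ_{(0,tH)}`, where `n = H²/2`. -/
noncomputable def bridgelandSlope (n t r d a : ℝ) : ℝ :=
  (a - r * n * t ^ 2) / (2 * n * d * t)

theorem bridgelandSlope_lt_bridgelandSlope_iff {n t r d a r₁ d₁ a₁ : ℝ}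
    (hn : 0 < n) (ht : 0 < t) (hd : 0 < d) (hd₁ : 0 < d₁) :
    bridgelandSlope n t r₁ d₁ a₁ < bridgelandSlope n t r d a ↔
      n * t ^ 2 * (r * d₁ - r₁ * d) < a * d₁ - a₁ * d := by
  have hnt : 0 < 2 * n * t := by positivity
  have hcleared : (a - r * n * t ^ 2) * (2 * n * d₁ * t) - (a₁ - r₁ * n * t ^ 2) * (2 * n * d * t)
      = 2 * n * t * (a * d₁ - a₁ * d - n * t ^ 2 * (r * d₁ - r₁ * d)) := by ring
  rw [bridgelandSlope, bridgelandSlope, div_lt_div_iff₀ (by positivity) (by positivity),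
    ← sub_pos, hcleared, mul_pos_iff_of_pos_left hnt, sub_pos]

theorem neg_of_lt_of_eq_mul_sq {n t₀ t x y : ℝ} (hn : 0 < n) (ht₀ : 0 ≤ t₀) (ht : t₀ < t)
    (hwall : y = n * t₀ ^ 2 * x) (hlt : n * t ^ 2 * x < y) : x < 0 := by
  have hsq : 0 < n * (t ^ 2 - t₀ ^ 2) := mul_pos hn (by nlinarith)
  nlinarith

/-- Lemma 4.2 of the paper: if `(0, t₀H)` lies on the wall defined
by `(r₁, d₁, a₁)` and the subobject has strictly larger Bridgeland slope for
`t` just above `t₀`, then `rd₁ − r₁d < 0` and `ad₁ − a₁d < 0`. -/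
theorem stmt6 (n d d₁ t₀ ε r r₁ a a₁ : ℝ)
    (hn : 0 < n) (hd : 0 < d) (hd₁ : 0 < d₁) (ht₀ : 0 < t₀) (hε : 0 < ε)
    (hwall : a * d₁ - a₁ * d = n * t₀ ^ 2 * (r * d₁ - r₁ * d))
    (hslope : ∀ t : ℝ, t₀ < t → t < t₀ + ε →
      (a - r * n * t ^ 2) / (2 * n * d * t) > (a₁ - r₁ * n * t ^ 2) / (2 * n * d₁ * t)) :
    r * d₁ - r₁ * d < 0 ∧ a * d₁ - a₁ * d < 0 := by
  obtain ⟨t, ht₀t, htε⟩ := exists_between (lt_add_of_pos_right t₀ hε)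
  have hcross : n * t ^ 2 * (r * d₁ - r₁ * d) < a * d₁ - a₁ * d :=
    (bridgelandSlope_lt_bridgelandSlope_iff hn (ht₀.trans ht₀t) hd hd₁).1 (hslope t ht₀t htε)
  have hrank : r * d₁ - r₁ * d < 0 := neg_of_lt_of_eq_mul_sq hn ht₀.le ht₀t hwall hcross
  exact ⟨hrank, hwall ▸ mul_neg_of_pos_of_neg (by positivity) hrank⟩
end
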